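/- Let n ∈ ℕ and 1 ≤ s ≤ m_n − 1. Then for every x ∈ G_m, s·M_n·K_{s·M_n}(x) = (Σ_{l=0}^{s−1} Σ_{i=0}^{l−1} r_n(x)^i)·M_n·D_{M_n}(x) + (Σ_{l=0}^{s−1} r_n(x)^l)·M_n·K_{M_n}(x). -/

import Mathlib

/-!
Splitting `k < s M_n` as `k = l M_n + j` with `l < s` and `j < M_n`, the digit expansion of `k`
is that of `j` with the digit `l` added in position `n`, so `ψ_k = r_n^l ψ_j`. Hence
`D_{l M_n + j} = (1 + r_n + ⋯ + r_n^{l-1}) D_{M_n} + r_n^l D_j`, and summing this over the `s`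
blocks of length `M_n` gives `s M_n K_{s M_n} = ∑_{k < s M_n} D_k` in the required form.
-/

open MeasureTheory Complex Filter Finset Topology ENNReal NNReal Asymptotics

noncomputable section

namespace Vilenkin

/-- Discrete topology on each cyclic group. -/
instance (n : ℕ) : TopologicalSpace (ZMod n) := ⊥

instance (n : ℕ) : DiscreteTopology (ZMod n) := ⟨rfl⟩

/-- Discrete measurable structure on each cyclic group. -/
instance (n : ℕ) : MeasurableSpace (ZMod n) := ⊤

instance (n : ℕ) : BorelSpace (ZMod n) := ⟨borel_eq_top_of_discrete.symm⟩

instance (n : ℕ) : IsTopologicalAddGroup (ZMod n) :=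
  { continuous_add := continuous_of_discreteTopology
    continuous_neg := continuous_of_discreteTopology }

variable (m : ℕ → ℕ)

/-- The Vilenkin group: the product of the cyclic groups `ZMod (m k)`. -/
abbrev G := ∀ k : ℕ, ZMod (m k)

/-- The generalized powers `M_0 = 1`, `M_{k+1} = m_k M_k`. -/
def M : ℕ → ℕ
  | 0 => 1
  | k + 1 => m k * M k

/-- The `k`-th digit of `n` in the generalized number system based on `m`. -/
def digit (n k : ℕ) : ℕ := n / M m k % m k

/-- The normalized Haar (product) probability measure on the bounded Vilenkin group. -/
def haarM (hm : ∀ k, 2 ≤ m k) : Measure (G m) :=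
  haveI : ∀ k, NeZero (m k) := fun k => ⟨by have := hm k; omega⟩
  haveI : ∀ k, CompactSpace (ZMod (m k)) := fun k => Finite.compactSpace
  Measure.addHaarMeasure (⊤ : TopologicalSpace.PositiveCompacts (G m))

/-- The generalized Rademacher functions. -/
def rad (k : ℕ) (x : G m) : ℂ :=
  Complex.exp (2 * Real.pi * Complex.I * ((x k).val : ℂ) / (m k : ℂ))

/-- The Vilenkin system. -/
def psi (n : ℕ) (x : G m) : ℂ :=
  ∏ k ∈ Finset.range (n + 1), rad m k x ^ digit m n k

/-- The Dirichlet kernels. -/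
def Dker (n : ℕ) (x : G m) : ℂ := ∑ k ∈ Finset.range n, psi m k x

/-- The Fejér kernels. -/
def Kker (n : ℕ) (x : G m) : ℂ := (n : ℂ)⁻¹ * ∑ k ∈ Finset.range n, Dker m k x

/-- `Q_n = q_0 + ⋯ + q_{n-1}`. -/
def Q (q : ℕ → ℝ) (n : ℕ) : ℝ := ∑ k ∈ Finset.range n, q k

/-- The Nörlund kernels. -/
def Fker (q : ℕ → ℝ) (n : ℕ) (x : G m) : ℂ :=
  (Q q n : ℂ)⁻¹ * ∑ k ∈ Finset.Icc 1 n, (q (n - k) : ℂ) * Dker m k x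

/-- The `T`-mean kernels. -/
def Tker (q : ℕ → ℝ) (n : ℕ) (x : G m) : ℂ :=
  (Q q n : ℂ)⁻¹ * ∑ k ∈ Finset.Icc 1 n, (q k : ℂ) * Dker m k x

/-- Vilenkin-Fourier coefficients. -/
def fourierCoeff (hm : ∀ k, 2 ≤ m k) (f : G m → ℂ) (n : ℕ) : ℂ :=
  ∫ x, f x * (starRingEnd ℂ) (psi m n x) ∂(haarM m hm)

/-- Partial sums of the Vilenkin-Fourier series. -/
def S (hm : ∀ k, 2 ≤ m k) (f : G m → ℂ) (n : ℕ) (x : G m) : ℂ :=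
  ∑ k ∈ Finset.range n, fourierCoeff m hm f k * psi m k x

/-- The Nörlund means. -/
def t (hm : ∀ k, 2 ≤ m k) (q : ℕ → ℝ) (n : ℕ) (f : G m → ℂ) (x : G m) : ℂ :=
  (Q q n : ℂ)⁻¹ * ∑ k ∈ Finset.Icc 1 n, (q (n - k) : ℂ) * S m hm f k x

/-- The Vilenkin interval `I_n(x)`. -/
def cyl (n : ℕ) (x : G m) : Set (G m) := {y | ∀ j < n, y j = x j}

/-- The largest index `j` such that the digit `n_j` is nonzero (for `n ≥ 1`). -/
def ord (n : ℕ) : ℕ := Nat.findGreatest (fun j => digit m n j ≠ 0) n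

/-- The element of `G_m` having `r` at the `s`-th coordinate and `0` elsewhere. -/
def spike (s r : ℕ) : G m := fun k => if k = s then (r : ZMod (m k)) else 0

/-- The operator `W_A` of Goginava and Gogoladze. -/
def W (hm : ∀ k, 2 ≤ m k) (f : G m → ℂ) (A : ℕ) (x : G m) : ℝ :=
  ∑ s ∈ Finset.range A, (M m s : ℝ) *
    ∑ r ∈ Finset.Icc 1 (m s - 1),
      ∫ u in cyl m A (x - spike m s r), ‖f u - f x‖ ∂(haarM m hm)

/-- `x` is a Vilenkin–Lebesgue point of `f`. -/
def VilenkinLebesguePoint (hm : ∀ k, 2 ≤ m k) (f : G m → ℂ) (x : G m) : Prop :=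
  Tendsto (fun A => W m hm f A x) atTop (𝓝 0)

/-- `x` is a Lebesgue point of `f`. -/
def LebesguePoint (hm : ∀ k, 2 ≤ m k) (f : G m → ℂ) (x : G m) : Prop :=
  Tendsto (fun n => (M m n : ℂ) * ∫ u in cyl m n x, f u ∂(haarM m hm)) atTop (𝓝 (f x))

lemma M_pos (hm : ∀ k, 0 < m k) (k : ℕ) : 0 < M m k := by
  induction k with
  | zero => simp [M]
  | succ k ih => exact Nat.mul_pos (hm k) ih

lemma M_mono (hm : ∀ k, 0 < m k) : Monotone (M m) :=
  monotone_nat_of_le_succ fun k => Nat.le_mul_of_pos_left _ (hm k)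

lemma lt_M (hm : ∀ k, 2 ≤ m k) (k : ℕ) : k < M m k := by
  induction k with
  | zero => simp [M]
  | succ k ih =>
    have : 2 * M m k ≤ m k * M m k := Nat.mul_le_mul_right _ (hm k)
    simp only [M]
    omega

lemma M_dvd_M {k n : ℕ} (hkn : k ≤ n) : M m k ∣ M m n := by
  induction n, hkn using Nat.le_induction with
  | base => exact dvd_rfl
  | succ n _ ih => exact ih.mul_left _

lemma digit_eq_zero_of_lt {N k : ℕ} (h : N < M m k) : digit m N k = 0 := by
  simp [digit, Nat.div_eq_of_lt h]

lemma digit_mul_add_of_lt (hm : ∀ k, 0 < m k) {n k : ℕ} (hk : k < n) (l j : ℕ) :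
    digit m (l * M m n + j) k = digit m j k := by
  obtain ⟨c, hc⟩ := M_dvd_M m (Nat.succ_le_of_lt hk)
  have hsplit : l * M m n + j = j + l * c * m k * M m k := by
    rw [hc, M]
    ring
  rw [digit, hsplit, Nat.add_mul_div_right _ _ (M_pos m hm k), Nat.add_mul_mod_self_right, digit]

lemma digit_mul_add_self {n l j : ℕ} (hl : l < m n) (hj : j < M m n) :
    digit m (l * M m n + j) n = l := by
  rw [digit, mul_comm l, Nat.mul_add_div (by omega), Nat.div_eq_of_lt hj, add_zero,
    Nat.mod_eq_of_lt hl]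

lemma prod_range_rad_pow_digit_eq (hm : ∀ k, 0 < m k) {N R R' : ℕ} (hN : N < M m R)
    (hR : R ≤ R') (x : G m) :
    ∏ k ∈ range R', rad m k x ^ digit m N k = ∏ k ∈ range R, rad m k x ^ digit m N k := by
  refine (prod_subset (range_subset_range.2 hR) fun k _ hk => ?_).symm
  have hRk : R ≤ k := by simpa using hk
  rw [digit_eq_zero_of_lt m (hN.trans_le (M_mono m hm hRk)), pow_zero]

lemma psi_eq_prod_range (hm : ∀ k, 2 ≤ m k) {N R : ℕ} (hN : N < M m R) (x : G m) :
    psi m N x = ∏ k ∈ range R, rad m k x ^ digit m N k := by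
  have hpos : ∀ k, 0 < m k := fun k => by have := hm k; omega
  have hN' : N < M m (N + 1) := (lt_M m hm N).trans_le (M_mono m hpos N.le_succ)
  rw [psi, ← prod_range_rad_pow_digit_eq m hpos hN' (le_max_left _ R),
    prod_range_rad_pow_digit_eq m hpos hN (le_max_right (N + 1) R)]

lemma psi_mul_M_add (hm : ∀ k, 2 ≤ m k) {n l j : ℕ} (hl : l < m n) (hj : j < M m n)
    (x : G m) : psi m (l * M m n + j) x = rad m n x ^ l * psi m j x := by
  have hpos : ∀ k, 0 < m k := fun k => by have := hm k; omega
  have hlt : l * M m n + j < M m (n + 1) :=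
    calc l * M m n + j < (l + 1) * M m n := by rw [add_one_mul]; omega
      _ ≤ M m (n + 1) := Nat.mul_le_mul_right _ hl
  rw [psi_eq_prod_range m hm hlt, psi_eq_prod_range m hm hj, prod_range_succ,
    digit_mul_add_self m hl hj, mul_comm]
  exact congrArg _ (prod_congr rfl fun k hk => by
    rw [digit_mul_add_of_lt m hpos (mem_range.1 hk)])

lemma Dker_mul_M_add (hm : ∀ k, 2 ≤ m k) {n l j : ℕ} (hl : l < m n) (hj : j ≤ M m n)
    (x : G m) :
    Dker m (l * M m n + j) x = Dker m (l * M m n) x + rad m n x ^ l * Dker m j x := by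
  rw [Dker, sum_range_add, Dker, Dker, mul_sum]
  exact congrArg _ (sum_congr rfl fun i hi =>
    psi_mul_M_add m hm hl ((mem_range.1 hi).trans_le hj) x)

lemma Dker_mul_M (hm : ∀ k, 2 ≤ m k) {n l : ℕ} (hl : l ≤ m n) (x : G m) :
    Dker m (l * M m n) x = (∑ i ∈ range l, rad m n x ^ i) * Dker m (M m n) x := by
  induction l with
  | zero => simp [Dker]
  | succ l ih =>
    rw [add_one_mul, Dker_mul_M_add m hm hl le_rfl, ih (by omega), sum_range_succ, add_mul]

lemma sum_Dker_block (hm : ∀ k, 2 ≤ m k) {n l : ℕ} (hl : l < m n) (x : G m) :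
    ∑ j ∈ range (M m n), Dker m (l * M m n + j) x =
      (M m n : ℂ) * (∑ i ∈ range l, rad m n x ^ i) * Dker m (M m n) x +
        rad m n x ^ l * ∑ j ∈ range (M m n), Dker m j x := by
  rw [sum_congr rfl fun j hj => Dker_mul_M_add m hm hl (mem_range.1 hj).le x,
    sum_add_distrib, sum_const, card_range, nsmul_eq_mul, Dker_mul_M m hm hl.le, ← mul_sum,
    mul_assoc]

lemma sum_range_mul_M_Dker (hm : ∀ k, 2 ≤ m k) {n s : ℕ} (hs : s ≤ m n) (x : G m) :
    ∑ k ∈ range (s * M m n), Dker m k x =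
      (∑ l ∈ range s, ∑ i ∈ range l, rad m n x ^ i) * (M m n : ℂ) * Dker m (M m n) x +
        (∑ l ∈ range s, rad m n x ^ l) * ∑ j ∈ range (M m n), Dker m j x := by
  induction s with
  | zero => simp
  | succ s ih =>
    rw [add_one_mul, sum_range_add, ih (by omega), sum_Dker_block m hm (by omega),
      sum_range_succ, sum_range_succ]
    ring

lemma natCast_mul_Kker (N : ℕ) (x : G m) : (N : ℂ) * Kker m N x = ∑ k ∈ range N, Dker m k x := by
  rcases N.eq_zero_or_pos with rfl | hN
  · simp
  · rw [Kker, mul_inv_cancel_left₀ (by exact_mod_cast hN.ne')]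

theorem statement17 (hm : ∀ k, 2 ≤ m k)
    (n s : ℕ) (hs2 : s ≤ m n - 1) (x : G m) :
    (s : ℂ) * (M m n : ℂ) * Kker m (s * M m n) x =
      (∑ l ∈ Finset.range s, ∑ i ∈ Finset.range l, rad m n x ^ i) * (M m n : ℂ) *
          Dker m (M m n) x +
        (∑ l ∈ Finset.range s, rad m n x ^ l) * (M m n : ℂ) * Kker m (M m n) x := by
  rw [← Nat.cast_mul, natCast_mul_Kker, mul_assoc (∑ l ∈ range s, rad m n x ^ l),
    natCast_mul_Kker, sum_range_mul_M_Dker m hm (by omega)]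

end Vilenkin
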